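/- Let R be a commutative ring, ε ∈ R with ε² = 1, S an associative R-algebra, and Q₀, Q₁, Q₂, Q₃ ∈ S satisfying the A1_ε relations. With b₀ = 1, b₁ = ε, b₂ = b₃ = 1, phase P(μ,ν) = −1 if μ ≠ ν and μ,ν ∈ {1,2,3} and P(μ,ν) = 1 otherwise, c := Q₀² + ε·Q₁² + Q₂² + Q₃², and y := c − Q₀², one has: Σ_{μ,ν∈{0,1,2,3}} P(μ,ν) · b_μ b_ν · Q_μ Q_ν Q_μ Q_ν = c² − ε·y. -/

import Mathlib

/-!
Where `Q_μ` and `Q_ν` commute (`μ = ν` or one index is `0`), `Q_μ Q_ν Q_μ Q_ν = Q_μ² Q_ν²`. For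
`μ ≠ ν` in `{1,2,3}` the phase is `-1`, and `-Q_μ Q_ν Q_μ Q_ν = Q_μ² Q_ν² - Q_μ {Q_μ, Q_ν} Q_ν`.
Hence the weight is `c²` minus the six terms `b_μ b_ν Q_μ {Q_μ, Q_ν} Q_ν`. By the anticommutation
relations these add up to `ε` times the sum of all six orderings of `Q₁ Q₂ Q₃`, which equals
`ε (Q₁ {Q₂, Q₃} + Q₂ {Q₃, Q₁} + Q₃ {Q₁, Q₂}) = ε (ε Q₁² + Q₂² + Q₃²) = ε y`.
-/

/-- Diagonal entries `b₀ = 1, b₁ = ε, b₂ = b₃ = 1` of the inverse bilinear form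
`C = diag(1,ε,1,1)` of `A1_ε`. -/
def bC {R : Type*} [CommRing R] (ε : R) : Fin 4 → R := ![1, ε, 1, 1]

/-- Grading phase: `P(μ,ν) = −1` if `μ ≠ ν` and both `μ, ν ∈ {1,2,3}`,
otherwise `P(μ,ν) = 1`. -/
def phC {R : Type*} [CommRing R] (μ ν : Fin 4) : R :=
  if μ ≠ ν ∧ μ ≠ 0 ∧ ν ≠ 0 then -1 else 1

section Ring

variable {S : Type*} [Ring S]

theorem neg_mul_mul_mul_eq_sq_mul_sq_sub (a b : S) :
    -(a * b * a * b) = a ^ 2 * b ^ 2 - a * (a * b + b * a) * b := by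
  noncomm_ring

theorem anticomm_sum_eq_sum_perm (a b c : S) :
    a * (b * c + c * b) + b * (c * a + a * c) + c * (a * b + b * a)
      = a * b * c + a * c * b + b * a * c + b * c * a + c * a * b + c * b * a := by
  noncomm_ring

end Ring

section Algebra

variable {R : Type*} [CommRing R] {S : Type*} [Ring S] [Algebra R S]

def crossingCorrection (ε : R) (Q : Fin 4 → S) : S :=
  ∑ μ : Fin 4, ∑ ν : Fin 4, if μ ≠ ν ∧ μ ≠ 0 ∧ ν ≠ 0 then
    (bC ε μ * bC ε ν) • (Q μ * (Q μ * Q ν + Q ν * Q μ) * Q ν) else 0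

theorem phC_mul_smul_eq_smul_mul_smul_sub (ε : R) (Q : Fin 4 → S)
    (h0 : ∀ k, Commute (Q 0) (Q k)) (μ ν : Fin 4) :
    (phC μ ν * (bC ε μ * bC ε ν)) • (Q μ * Q ν * Q μ * Q ν)
      = (bC ε μ • Q μ ^ 2) * (bC ε ν • Q ν ^ 2)
        - if μ ≠ ν ∧ μ ≠ 0 ∧ ν ≠ 0 then
            (bC ε μ * bC ε ν) • (Q μ * (Q μ * Q ν + Q ν * Q μ) * Q ν) else 0 := by
  rw [smul_mul_smul_comm, phC]
  split_ifs with hcross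
  · rw [neg_one_mul, neg_smul, ← smul_neg, neg_mul_mul_mul_eq_sq_mul_sq_sub, smul_sub]
  · have hcomm : Commute (Q μ) (Q ν) := by
      by_cases hμν : μ = ν
      · subst hμν
        exact Commute.refl _
      by_cases hμ : μ = 0
      · subst hμ
        exact h0 ν
      · obtain rfl : ν = 0 := by tauto
        exact (h0 μ).symm
    rw [one_mul, sub_zero, ← hcomm.mul_pow, sq, ← mul_assoc]

theorem crossing_weight_eq_sq_sub_crossingCorrection (ε : R) (Q : Fin 4 → S)
    (h0 : ∀ k, Commute (Q 0) (Q k)) :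
    (∑ μ : Fin 4, ∑ ν : Fin 4,
        (phC (R := R) μ ν * (bC ε μ * bC ε ν)) • (Q μ * Q ν * Q μ * Q ν))
      = (∑ μ, bC ε μ • Q μ ^ 2) ^ 2 - crossingCorrection ε Q := by
  simp only [phC_mul_smul_eq_smul_mul_smul_sub ε Q h0, Finset.sum_sub_distrib, sq,
    Finset.sum_mul_sum, crossingCorrection]

theorem crossingCorrection_eq (ε : R) (Q : Fin 4 → S)
    (h12 : Q 1 * Q 2 + Q 2 * Q 1 = Q 3)
    (h23 : Q 2 * Q 3 + Q 3 * Q 2 = ε • Q 1)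
    (h31 : Q 3 * Q 1 + Q 1 * Q 3 = Q 2) :
    crossingCorrection ε Q = ε • (ε • Q 1 ^ 2 + Q 2 ^ 2 + Q 3 ^ 2) := by
  have hy : ε • Q 1 ^ 2 + Q 2 ^ 2 + Q 3 ^ 2
      = Q 1 * (Q 2 * Q 3 + Q 3 * Q 2) + Q 2 * (Q 3 * Q 1 + Q 1 * Q 3)
        + Q 3 * (Q 1 * Q 2 + Q 2 * Q 1) := by
    rw [h23, h31, h12, mul_smul_comm, sq, sq, sq]
  rw [hy, anticomm_sum_eq_sum_perm]
  simp only [crossingCorrection, ne_eq, Fin.isValue, bC, Fin.sum_univ_four, not_true_eq_false,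
    and_false, ↓reduceIte, one_ne_zero, not_false_eq_true, and_true, Matrix.cons_val_one,
    Matrix.cons_val_zero, zero_add, Fin.reduceEq, Matrix.cons_val, mul_one, zero_ne_one,
    add_zero, and_self, one_mul, one_smul, smul_add]
  rw [add_comm (Q 2 * Q 1), add_comm (Q 3 * Q 2), add_comm (Q 1 * Q 3), h12, h23, h31]
  simp only [mul_smul_comm, smul_mul_assoc]
  abel

end Algebra

theorem A1eps_crossing_weight_general
    {R : Type*} [CommRing R] {S : Type*} [Ring S] [Algebra R S]
    (ε : R)
    (Q : Fin 4 → S)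
    (h01 : Q 0 * Q 1 = Q 1 * Q 0)
    (h02 : Q 0 * Q 2 = Q 2 * Q 0)
    (h03 : Q 0 * Q 3 = Q 3 * Q 0)
    (h12 : Q 1 * Q 2 + Q 2 * Q 1 = Q 3)
    (h23 : Q 2 * Q 3 + Q 3 * Q 2 = ε • Q 1)
    (h31 : Q 3 * Q 1 + Q 1 * Q 3 = Q 2) :
    (∑ μ : Fin 4, ∑ ν : Fin 4,
        (phC (R := R) μ ν * (bC ε μ * bC ε ν)) • (Q μ * Q ν * Q μ * Q ν))
      = (Q 0 ^ 2 + ε • Q 1 ^ 2 + Q 2 ^ 2 + Q 3 ^ 2) ^ 2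
        - ε • ((Q 0 ^ 2 + ε • Q 1 ^ 2 + Q 2 ^ 2 + Q 3 ^ 2) - Q 0 ^ 2) := by
  have h0 : ∀ k, Commute (Q 0) (Q k) := by
    intro k
    fin_cases k
    exacts [Commute.refl _, h01, h02, h03]
  have hc : ∑ μ, bC ε μ • Q μ ^ 2 = Q 0 ^ 2 + ε • Q 1 ^ 2 + Q 2 ^ 2 + Q 3 ^ 2 := by
    simp [Fin.sum_univ_four, bC]
  rw [crossing_weight_eq_sq_sub_crossingCorrection ε Q h0,
    crossingCorrection_eq ε Q h12 h23 h31, hc]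
  congr 2
  abel

/-- **Weight of the order-2 chord diagram with two crossing chords:**
`Σ_{μ,ν} P(μ,ν)·b_μ b_ν·Q_μ Q_ν Q_μ Q_ν = c² − ε·y` where
`c = Q₀² + ε·Q₁² + Q₂² + Q₃²` and `y = c − Q₀²`. -/
theorem A1eps_crossing_weight
    {R : Type*} [CommRing R] {S : Type*} [Ring S] [Algebra R S]
    (ε : R) (hε : ε ^ 2 = 1)
    (Q : Fin 4 → S)
    (h01 : Q 0 * Q 1 = Q 1 * Q 0)
    (h02 : Q 0 * Q 2 = Q 2 * Q 0)
    (h03 : Q 0 * Q 3 = Q 3 * Q 0)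
    (h12 : Q 1 * Q 2 + Q 2 * Q 1 = Q 3)
    (h23 : Q 2 * Q 3 + Q 3 * Q 2 = ε • Q 1)
    (h31 : Q 3 * Q 1 + Q 1 * Q 3 = Q 2) :
    (∑ μ : Fin 4, ∑ ν : Fin 4,
        (phC (R := R) μ ν * (bC ε μ * bC ε ν)) • (Q μ * Q ν * Q μ * Q ν))
      = (Q 0 ^ 2 + ε • Q 1 ^ 2 + Q 2 ^ 2 + Q 3 ^ 2) ^ 2
        - ε • ((Q 0 ^ 2 + ε • Q 1 ^ 2 + Q 2 ^ 2 + Q 3 ^ 2) - Q 0 ^ 2) :=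
  A1eps_crossing_weight_general ε Q h01 h02 h03 h12 h23 h31
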